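/- Index of a Toeplitz-type operator as a difference class: if P and Q are orthogonal projections on a Hilbert space with P - Q compact, then the operator QP : im(P) → im(Q) is Fredholm, and its index equals dim ker(QP|_{im P}) - dim ker(PQ|_{im Q}). -/

import Mathlib

/-- The Toeplitz-type operator `QP : im(P) → im(Q)`. -/
noncomputable def toep {H : Type*} [NormedAddCommGroup H] [InnerProductSpace ℂ H]
    (P Q : H →L[ℂ] H) : (LinearMap.range (P : H →ₗ[ℂ] H)) →L[ℂ] (LinearMap.range (Q : H →ₗ[ℂ] H)) :=
  ContinuousLinearMap.codRestrict (Q.comp (LinearMap.range (P : H →ₗ[ℂ] H)).subtypeL)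
    (LinearMap.range (Q : H →ₗ[ℂ] H)) (fun _ => LinearMap.mem_range_self (Q : H →ₗ[ℂ] H) _)

/-- The index `dim ker - dim coker` of an operator. -/
noncomputable def fredIndex {E F : Type*} [NormedAddCommGroup E] [NormedSpace ℂ E]
    [NormedAddCommGroup F] [NormedSpace ℂ F] (T : E →L[ℂ] F) : ℤ :=
  (Module.finrank ℂ (LinearMap.ker (T : E →ₗ[ℂ] F)) : ℤ) - (Module.finrank ℂ (F ⧸ LinearMap.range (T : E →ₗ[ℂ] F)) : ℤ)

/-!
On `im P` one has `PQ · QP - 1 = -P(P - Q)`, so `PQ : im Q → im P` is a left parametrix of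
`QP : im P → im Q` modulo compact operators, and symmetrically. An operator `T` with `ST - 1`
compact has a finite-dimensional kernel (the identity of `ker T` is compact) and closed range
(on a closed complement of its kernel it is bounded below: otherwise unit vectors `uₙ` with
`T uₙ → 0` would have a subsequence converging to a unit vector of the kernel). Since `QP` and `PQ`
are adjoint to each other, the cokernel of `QP` is the orthogonal complement of its closed range,
which is `ker PQ`.
-/

open Filter Topology
open scoped InnerProduct InnerProductSpace

namespace ContinuousLinearMap

section CompactParametrix

variable {𝕜 E F : Type*} [NontriviallyNormedField 𝕜] [CompleteSpace 𝕜] [NormedAddCommGroup E]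
  [NormedSpace 𝕜 E] [NormedAddCommGroup F] [NormedSpace 𝕜 F] {T : E →L[𝕜] F} {S : F →L[𝕜] E}

theorem finiteDimensional_ker_of_isCompactOperator_comp_sub_id
    (hK : IsCompactOperator ⇑(S ∘L T - 1)) : FiniteDimensional 𝕜 T.ker := by
  set K := S ∘L T - 1
  have hK_ker : ∀ x ∈ T.ker, K x = -x := fun x hx ↦ by simp [K, show T x = 0 from hx]
  have hmaps : ∀ x ∈ T.ker, K x ∈ T.ker := fun x hx ↦ hK_ker x hx ▸ neg_mem hx
  have hid : IsCompactOperator (_root_.id : T.ker → T.ker) := by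
    have h_neg : -⇑((K : E →ₗ[𝕜] E).restrict hmaps) = _root_.id := by
      funext x; ext; simp [hK_ker x x.2]
    exact h_neg ▸ (hK.restrict hmaps T.isClosed_ker).neg
  exact .of_isCompactOperator_id hid

end CompactParametrix

section RCLike

variable {𝕜 E F : Type*} [RCLike 𝕜] [NormedAddCommGroup E] [NormedSpace 𝕜 E]
  [NormedAddCommGroup F] [NormedSpace 𝕜 F] {T : E →L[𝕜] F} {S : F →L[𝕜] E}

theorem exists_norm_eq_one_norm_apply_lt_of_not_antilipschitz
    (h : ¬ ∃ c, AntilipschitzWith c T) {ε : ℝ} (hε : 0 < ε) : ∃ u : E, ‖u‖ = 1 ∧ ‖T u‖ < ε := by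
  rw [antilipschitzWith_iff_exists_mul_le_norm] at h
  push Not at h
  obtain ⟨x, hx⟩ := h ε hε
  have hx0 : x ≠ 0 := by rintro rfl; simp at hx
  refine ⟨(‖x‖⁻¹ : 𝕜) • x, norm_smul_inv_norm hx0, ?_⟩
  rw [map_smul, norm_smul, norm_inv, RCLike.norm_ofReal, abs_norm,
    inv_mul_lt_iff₀ (norm_pos_iff.mpr hx0)]
  linarith

theorem antilipschitz_of_injective_of_isCompactOperator_comp_sub_id
    (hT : Function.Injective T) (hK : IsCompactOperator ⇑(S ∘L T - 1)) :
    ∃ c, AntilipschitzWith c T := by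
  by_contra h
  choose u hu_norm hTu using fun n : ℕ ↦
    exists_norm_eq_one_norm_apply_lt_of_not_antilipschitz h (Nat.one_div_pos_of_nat (n := n))
  obtain ⟨C, hC, hKC⟩ := hK.image_closedBall_subset_compact 1
  obtain ⟨y, -, φ, hφ, hy⟩ := hC.tendsto_subseq (x := fun n ↦ (S ∘L T - 1) (u n))
    fun n ↦ hKC ⟨u n, by simp [hu_norm], rfl⟩
  have hTu_lim : Tendsto (fun n ↦ T (u n)) atTop (𝓝 0) :=
    squeeze_zero_norm (fun n ↦ (hTu n).le) tendsto_one_div_add_atTop_nhds_zero_nat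
  -- `u = S (T u) - (S T - 1) u`, and both terms converge along `φ`
  have hu_lim : Tendsto (u ∘ φ) atTop (𝓝 (-y)) := by
    have := (((S.continuous.tendsto 0).comp hTu_lim).comp hφ.tendsto_atTop).sub hy
    simpa [Function.comp_def] using this
  have hy_norm : ‖-y‖ = 1 := tendsto_nhds_unique hu_lim.norm (by simp [hu_norm])
  have hTy : T (-y) = 0 :=
    tendsto_nhds_unique ((T.continuous.tendsto _).comp hu_lim) (hTu_lim.comp hφ.tendsto_atTop)
  have hy : -y = 0 := hT (by rw [hTy, map_zero])
  simp [hy] at hy_norm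

theorem isClosed_range_of_isCompactOperator_comp_sub_id [CompleteSpace E]
    (hK : IsCompactOperator ⇑(S ∘L T - 1)) : IsClosed (T.range : Set F) := by
  have := finiteDimensional_ker_of_isCompactOperator_comp_sub_id hK
  obtain ⟨M, hM⟩ := (Submodule.ClosedComplemented.of_finiteDimensional T.ker).exists_isTopCompl
  have : CompleteSpace M := hM.isClosed'.completeSpace_coe
  set p := M.projectionOntoL T.ker hM.symm
  have hinj : Function.Injective (T ∘L M.subtypeL) :=
    (injective_iff_map_eq_zero _).mpr fun x hx ↦
      Subtype.ext (Submodule.disjoint_def.mp hM.isCompl.disjoint _ hx x.2)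
  have hK' : IsCompactOperator ⇑((p ∘L S) ∘L (T ∘L M.subtypeL) - 1) := by
    have h_eq : (p ∘L S) ∘L (T ∘L M.subtypeL) - 1 = p ∘L (S ∘L T - 1) ∘L M.subtypeL := by
      ext x; simp [p, Submodule.projectionOntoL_apply_left]
    rw [h_eq]
    exact (hK.comp_clm _).clm_comp p
  obtain ⟨c, hc⟩ := antilipschitz_of_injective_of_isCompactOperator_comp_sub_id hinj hK'
  have h_range : (T.range : Set F) = Set.range (T ∘L M.subtypeL) := by
    rw [← Submodule.map_eq_range_iff.mpr hM.isCompl.codisjoint.symm]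
    ext; simp
  rw [h_range]
  exact hc.isClosed_range (T ∘L M.subtypeL).uniformContinuous

end RCLike

section Hilbert

variable {𝕜 E F : Type*} [RCLike 𝕜] [NormedAddCommGroup E] [InnerProductSpace 𝕜 E]
  [CompleteSpace E] [NormedAddCommGroup F] [InnerProductSpace 𝕜 F] [CompleteSpace F]
  {T : E →L[𝕜] F}

noncomputable def quotientRangeEquivKerAdjoint (hT : IsClosed (T.range : Set F)) :
    (F ⧸ T.range) ≃ₗ[𝕜] T†.ker :=
  haveI : CompleteSpace T.range := hT.completeSpace_coe
  T.range.quotientEquivOrthogonal.toLinearEquiv.trans (LinearEquiv.ofEq _ _ T.orthogonal_range)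

theorem finiteDimensional_quotient_range_of_isClosed (hT : IsClosed (T.range : Set F))
    [FiniteDimensional 𝕜 (T†).ker] : FiniteDimensional 𝕜 (F ⧸ T.range) :=
  .equiv (quotientRangeEquivKerAdjoint hT).symm

theorem finrank_quotient_range_of_isClosed (hT : IsClosed (T.range : Set F)) :
    Module.finrank 𝕜 (F ⧸ T.range) = Module.finrank 𝕜 (T†).ker :=
  (quotientRangeEquivKerAdjoint hT).finrank_eq

end Hilbert

theorem IsIdempotentElem.apply_of_mem_range {R M : Type*} [Ring R] [TopologicalSpace M]
    [AddCommGroup M] [Module R M] {p : M →L[R] M} (hp : IsIdempotentElem p) {x : M}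
    (hx : x ∈ p.range) : p x = x :=
  (LinearMap.IsIdempotentElem.mem_range_iff (IsIdempotentElem.toLinearMap hp)).mp hx

end ContinuousLinearMap

section Toeplitz

open ContinuousLinearMap

variable {H : Type*} [NormedAddCommGroup H] [InnerProductSpace ℂ H] {P Q : H →L[ℂ] H}

@[simp]
theorem coe_toep_apply (x : LinearMap.range (P : H →ₗ[ℂ] H)) : (toep P Q x : H) = Q x := rfl

theorem toep_eq_adjoint [CompleteSpace H] [CompleteSpace (LinearMap.range (P : H →ₗ[ℂ] H))]
    [CompleteSpace (LinearMap.range (Q : H →ₗ[ℂ] H))] (hP : IsIdempotentElem P)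
    (hQ : IsIdempotentElem Q) (hPsa : IsSelfAdjoint P) (hQsa : IsSelfAdjoint Q) :
    toep Q P = (toep P Q)† := by
  refine (ContinuousLinearMap.eq_adjoint_iff _ _).mpr fun y x ↦ ?_
  calc ⟪P y, (x : H)⟫_ℂ = ⟪(y : H), P x⟫_ℂ := hPsa.isSymmetric _ _
    _ = ⟪Q y, (x : H)⟫_ℂ := by
      rw [IsIdempotentElem.apply_of_mem_range hP x.2, IsIdempotentElem.apply_of_mem_range hQ y.2]
    _ = ⟪(y : H), Q x⟫_ℂ := hQsa.isSymmetric _ _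

theorem isCompactOperator_toep_comp_toep_sub_one (hP : IsIdempotentElem P)
    (hc : IsCompactOperator ⇑(P - Q)) :
    IsCompactOperator ⇑(toep Q P ∘L toep P Q - 1) := by
  set V := LinearMap.range (P : H →ₗ[ℂ] H)
  have hV : ∀ x : V, (-(P ∘L (P - Q)) ∘L V.subtypeL) x ∈ V := fun x ↦ ⟨-((P - Q) x), by simp⟩
  have h_eq : ⇑(toep Q P ∘L toep P Q - 1) =
      Set.codRestrict (⇑(-(P ∘L (P - Q)) ∘L V.subtypeL)) V hV := by
    funext x
    ext
    simp [IsIdempotentElem.apply_of_mem_range hP x.2]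
  rw [h_eq]
  exact ((hc.clm_comp P).neg.comp_clm V.subtypeL).codRestrict hV
    (IsIdempotentElem.isClosed_range hP)

end Toeplitz

/-- if `P`, `Q` are orthogonal projections on a Hilbert space with `P - Q`
compact, then `QP : im(P) → im(Q)` is Fredholm (finite-dimensional kernel and cokernel,
closed range), and its index equals `dim ker(QP|_{im P}) - dim ker(PQ|_{im Q})`. -/
theorem toeplitz_fredholm_of_compact_difference {H : Type*} [NormedAddCommGroup H]
    [InnerProductSpace ℂ H] [CompleteSpace H] (P Q : H →L[ℂ] H)
    (hP : IsIdempotentElem P) (hQ : IsIdempotentElem Q)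
    (hPsa : IsSelfAdjoint P) (hQsa : IsSelfAdjoint Q)
    (hc : IsCompactOperator ⇑(P - Q)) :
    FiniteDimensional ℂ (LinearMap.ker (toep P Q : LinearMap.range (P : H →ₗ[ℂ] H) →ₗ[ℂ] LinearMap.range (Q : H →ₗ[ℂ] H))) ∧
    FiniteDimensional ℂ ((LinearMap.range (Q : H →ₗ[ℂ] H)) ⧸ LinearMap.range (toep P Q : LinearMap.range (P : H →ₗ[ℂ] H) →ₗ[ℂ] LinearMap.range (Q : H →ₗ[ℂ] H))) ∧
    IsClosed (LinearMap.range (toep P Q : LinearMap.range (P : H →ₗ[ℂ] H) →ₗ[ℂ] LinearMap.range (Q : H →ₗ[ℂ] H)) : Set (LinearMap.range (Q : H →ₗ[ℂ] H))) ∧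
    fredIndex (toep P Q) =
      (Module.finrank ℂ (LinearMap.ker (toep P Q : LinearMap.range (P : H →ₗ[ℂ] H) →ₗ[ℂ] LinearMap.range (Q : H →ₗ[ℂ] H))) : ℤ) -
        (Module.finrank ℂ (LinearMap.ker (toep Q P : LinearMap.range (Q : H →ₗ[ℂ] H) →ₗ[ℂ] LinearMap.range (P : H →ₗ[ℂ] H))) : ℤ) := by
  have : CompleteSpace (LinearMap.range (P : H →ₗ[ℂ] H)) :=
    (ContinuousLinearMap.IsIdempotentElem.isClosed_range hP).completeSpace_coe
  have : CompleteSpace (LinearMap.range (Q : H →ₗ[ℂ] H)) :=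
    (ContinuousLinearMap.IsIdempotentElem.isClosed_range hQ).completeSpace_coe
  have hK_P := isCompactOperator_toep_comp_toep_sub_one hP hc
  have hK_Q := isCompactOperator_toep_comp_toep_sub_one hQ (by simpa using hc.neg)
  have hclosed := ContinuousLinearMap.isClosed_range_of_isCompactOperator_comp_sub_id hK_P
  have hker_adj := ContinuousLinearMap.finiteDimensional_ker_of_isCompactOperator_comp_sub_id hK_Q
  rw [toep_eq_adjoint hP hQ hPsa hQsa] at hker_adj ⊢
  exact ⟨ContinuousLinearMap.finiteDimensional_ker_of_isCompactOperator_comp_sub_id hK_P,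
    ContinuousLinearMap.finiteDimensional_quotient_range_of_isClosed hclosed, hclosed,
    by rw [fredIndex, ContinuousLinearMap.finrank_quotient_range_of_isClosed hclosed]⟩
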